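/- arXiv:2205.10761 — 2 statements merged into one kernel-verified Lean document; each statement's English description precedes it below -/
import Mathlib

section
/- The efficient-influence-function estimating equation is unbiased at θ₀ when the outcome model is correct: if the nuisance functions π̄_A, π̄_S are arbitrary (bounded away from 0 and 1 appropriately) but μ̄_Y(s,a,x) = E{Y|S=s,A=a,X=x} is the true outcome regression, then E[EIF(O; θ₀, η̄)] = 0, where EIF is as in Theorem 1 with normalizing constant E[SA] and θ₀ = E{Δ₁(X)−Δ₀(X)|S=1,A=1}. -/
open MeasureTheory ProbabilityTheory

noncomputable def condMeanX {Ω 𝓧 : Type*} [MeasurableSpace Ω] [MeasurableSpace 𝓧]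
    (μ : Measure Ω) (X : Ω → 𝓧) (E : Set Ω) (f : Ω → ℝ) : Ω → ℝ :=
  (ProbabilityTheory.cond μ E)[f | MeasurableSpace.comap X inferInstance]

def evSA {Ω : Type*} (S A : Ω → ℝ) (s a : ℝ) : Set Ω := {ω | S ω = s ∧ A ω = a}

/-- The efficient influence function of Theorem 1, with normalizing constant `c = E[SA]`,
outcome-regression nuisances `m10, m01, m00`, propensity nuisances `pA1, pA0, pS`. -/
noncomputable def EIF {Ω : Type*} (S A Y : Ω → ℝ) (c : ℝ)
    (m10 m01 m00 pA1 pA0 pS : Ω → ℝ) (θ : ℝ) (ω : Ω) : ℝ :=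
  (S ω * A ω / c) * (Y ω - m10 ω - m01 ω + m00 ω - θ)
  - (S ω * (1 - A ω) / c) * (pA1 ω / (1 - pA1 ω)) * (Y ω - m10 ω)
  - ((1 - S ω) * A ω / c) * (pA1 ω / pA0 ω) * (pS ω / (1 - pS ω)) * (Y ω - m01 ω)
  + ((1 - S ω) * (1 - A ω) / c) * (pA1 ω / (1 - pA0 ω)) * (pS ω / (1 - pS ω))
      * (Y ω - m00 ω)

/-!
With the outcome regressions correct, the EIF splits into the four cells `{S = s, A = a}`.
On each cell it is a bounded `σ(X)`-measurable weight times the residual `Y - E[Y | X, cell]`,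
which integrates to zero by the pull-out property of conditional expectation, whatever the
(possibly misspecified) propensities in the weight are. The remaining term
`1{S = 1, A = 1} (Δ(X) - θ₀)` integrates to zero by the definition of `θ₀`.
-/

section Residuals

variable {Ω : Type*} {m₀ : MeasurableSpace Ω}

theorem MeasureTheory.Integrable.cond {μ : Measure Ω} {f : Ω → ℝ} (hf : Integrable f μ)
    (E : Set Ω) : Integrable f μ[|E] := by
  rcases eq_or_ne (μ E) 0 with hE0 | hE0
  · simp [cond_eq_zero_of_meas_eq_zero hE0]
  · exact hf.restrict.smul_measure (ENNReal.inv_ne_top.2 hE0)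

theorem integral_indicator_eq_toReal_mul_integral_cond (μ : Measure Ω) [IsFiniteMeasure μ]
    {E : Set Ω} (hE : MeasurableSet E) (h : Ω → ℝ) :
    ∫ ω, E.indicator h ω ∂μ = (μ E).toReal * ∫ ω, h ω ∂μ[|E] := by
  rw [integral_indicator hE]
  rcases eq_or_ne (μ E) 0 with hE0 | hE0
  · simp [Measure.restrict_eq_zero.2 hE0, hE0]
  · rw [ProbabilityTheory.cond, integral_smul_measure, smul_eq_mul, ENNReal.toReal_inv,
      ← mul_assoc, mul_inv_cancel₀ (ENNReal.toReal_ne_zero.2 ⟨hE0, measure_ne_top μ E⟩),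
      one_mul]

theorem integral_mul_sub_condExp_eq_zero {m : MeasurableSpace Ω} (hm : m ≤ m₀)
    {ν : Measure[m₀] Ω} [IsFiniteMeasure ν] {Y g : Ω → ℝ} (hY : Integrable Y ν)
    (hg : StronglyMeasurable[m] g) {C : ℝ} (hgC : ∀ ω, ‖g ω‖ ≤ C) :
    ∫ ω, g ω * (Y ω - ν[Y|m] ω) ∂ν = 0 := by
  have hgν : AEStronglyMeasurable[m₀] g ν := (hg.mono hm).aestronglyMeasurable
  have hgY : Integrable (fun ω => g ω * Y ω) ν := hY.bdd_mul hgν (ae_of_all _ hgC)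
  have hgE : Integrable (fun ω => g ω * ν[Y|m] ω) ν :=
    integrable_condExp.bdd_mul hgν (ae_of_all _ hgC)
  have pull_out : ∫ ω, g ω * ν[Y|m] ω ∂ν = ∫ ω, g ω * Y ω ∂ν :=
    calc ∫ ω, g ω * ν[Y|m] ω ∂ν = ∫ ω, ν[g * Y|m] ω ∂ν :=
          integral_congr_ae (condExp_mul_of_stronglyMeasurable_left hg hgY hY).symm
      _ = ∫ ω, g ω * Y ω ∂ν := integral_condExp hm
  simp_rw [mul_sub]
  rw [integral_sub hgY hgE, pull_out, sub_self]

variable {𝓧 : Type*} [MeasurableSpace 𝓧]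

theorem integral_indicator_mul_sub_condMeanX_eq_zero (μ : Measure Ω) [IsFiniteMeasure μ]
    {X : Ω → 𝓧} (hX : Measurable X) {E : Set Ω} (hE : MeasurableSet E) {Y m g : Ω → ℝ}
    (hY : Integrable Y μ) (hm : m =ᵐ[μ[|E]] condMeanX μ X E Y)
    (hg : Measurable[MeasurableSpace.comap X inferInstance] g) {C : ℝ}
    (hgC : ∀ ω, ‖g ω‖ ≤ C) :
    ∫ ω, E.indicator (fun ω => g ω * (Y ω - m ω)) ω ∂μ = 0 := by
  have hres : (fun ω => g ω * (Y ω - m ω)) =ᵐ[μ[|E]]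
      fun ω => g ω * (Y ω - condMeanX μ X E Y ω) := by
    filter_upwards [hm] with ω hω
    rw [hω]
  rw [integral_indicator_eq_toReal_mul_integral_cond μ hE, integral_congr_ae hres]
  exact mul_eq_zero_of_right _
    (integral_mul_sub_condExp_eq_zero hX.comap_le (hY.cond E) hg.stronglyMeasurable hgC)

theorem integral_indicator_sub_integral_cond_eq_zero (μ : Measure Ω) [IsFiniteMeasure μ]
    {E : Set Ω} (hE : MeasurableSet E) {f : Ω → ℝ} (hf : Integrable f μ) :
    ∫ ω, E.indicator (fun ω => f ω - ∫ ω', f ω' ∂μ[|E]) ω ∂μ = 0 := by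
  rw [integral_indicator_eq_toReal_mul_integral_cond μ hE]
  rcases eq_or_ne (μ E) 0 with hE0 | hE0
  · simp [hE0]
  · have := cond_isProbabilityMeasure (s := E) hE0
    rw [integral_sub (hf.cond E) (integrable_const _), integral_const]
    simp

end Residuals

theorem measurableSet_evSA {Ω : Type*} [MeasurableSpace Ω] {S A : Ω → ℝ} (hS : Measurable S)
    (hA : Measurable A) (s a : ℝ) : MeasurableSet (evSA S A s a) :=
  (hS (measurableSet_singleton s)).inter (hA (measurableSet_singleton a))

theorem EIF_eq_inv_mul_sum_indicator {Ω : Type*} {S A Y : Ω → ℝ} {ω : Ω}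
    (hS : S ω = 0 ∨ S ω = 1) (hA : A ω = 0 ∨ A ω = 1) (c θ : ℝ)
    (m11 m10 m01 m00 pA1 pA0 pS : Ω → ℝ) :
    EIF S A Y c m10 m01 m00 pA1 pA0 pS θ ω = c⁻¹ *
      (((evSA S A 1 1).indicator fun ω => Y ω - m11 ω)
      + ((evSA S A 1 1).indicator fun ω => m11 ω - m10 ω - (m01 ω - m00 ω) - θ)
      + ((evSA S A 1 0).indicator fun ω => -(pA1 ω / (1 - pA1 ω)) * (Y ω - m10 ω))
      + ((evSA S A 0 1).indicator
          fun ω => -(pA1 ω / pA0 ω * (pS ω / (1 - pS ω))) * (Y ω - m01 ω))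
      + ((evSA S A 0 0).indicator
          fun ω => pA1 ω / (1 - pA0 ω) * (pS ω / (1 - pS ω)) * (Y ω - m00 ω))) ω := by
  rcases hS with hs | hs <;> rcases hA with ha | ha <;>
    simp only [EIF, evSA, Pi.add_apply, Set.indicator_apply, Set.mem_ofPred_eq, hs, ha,
      zero_ne_one, one_ne_zero, and_self, and_true, and_false, if_true, if_false] <;>
    ring

theorem norm_div_le_inv_of_abs_le_one {u v ε : ℝ} (hε : 0 < ε) (hu : |u| ≤ 1)
    (hv : ε ≤ v) : ‖u / v‖ ≤ ε⁻¹ := by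
  rw [Real.norm_eq_abs, abs_div, abs_of_pos (hε.trans_le hv), ← one_div]
  exact div_le_div₀ zero_le_one hu hε hv

theorem norm_propensity_weights_le {ε a1 a0 s : ℝ} (hε : 0 < ε)
    (h : 0 ≤ s ∧ s < 1 - ε ∧ ε < a0 ∧ a0 < 1 - ε ∧ 0 ≤ a1 ∧ a1 < 1 - ε) :
    ‖a1 / (1 - a1)‖ ≤ ε⁻¹ ∧ ‖a1 / a0 * (s / (1 - s))‖ ≤ ε⁻¹ * ε⁻¹ ∧
      ‖a1 / (1 - a0) * (s / (1 - s))‖ ≤ ε⁻¹ * ε⁻¹ := by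
  obtain ⟨hs0, hs1, ha00, ha01, ha10, ha11⟩ := h
  have ha1 : |a1| ≤ 1 := abs_le.2 ⟨by linarith, by linarith⟩
  have hs : ‖s / (1 - s)‖ ≤ ε⁻¹ :=
    norm_div_le_inv_of_abs_le_one hε (abs_le.2 ⟨by linarith, by linarith⟩) (by linarith)
  refine ⟨norm_div_le_inv_of_abs_le_one hε ha1 (by linarith), ?_, ?_⟩ <;>
    refine (norm_mul_le _ _).trans (mul_le_mul ?_ hs (norm_nonneg _) (by positivity))
  · exact norm_div_le_inv_of_abs_le_one hε ha1 ha00.le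
  · exact norm_div_le_inv_of_abs_le_one hε ha1 (by linarith)

theorem stmt6_general
    {Ω 𝓧 : Type*} [MeasurableSpace Ω] [MeasurableSpace 𝓧]
    (μ : Measure Ω) [IsProbabilityMeasure μ]
    (S A Y : Ω → ℝ) (X : Ω → 𝓧)
    (hX : Measurable X) (hS : Measurable S) (hA : Measurable A)
    (hSbin : ∀ ω, S ω = 0 ∨ S ω = 1) (hAbin : ∀ ω, A ω = 0 ∨ A ω = 1)
    (hYint : Integrable Y μ)
    -- true outcome regressions μ_Y(s,a,X), measurable functions of X
    (m11 m10 m01 m00 : Ω → ℝ)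
    (hm11t : m11 =ᵐ[μ[|evSA S A 1 1]] condMeanX μ X (evSA S A 1 1) Y)
    (hm10t : m10 =ᵐ[μ[|evSA S A 1 0]] condMeanX μ X (evSA S A 1 0) Y)
    (hm01t : m01 =ᵐ[μ[|evSA S A 0 1]] condMeanX μ X (evSA S A 0 1) Y)
    (hm00t : m00 =ᵐ[μ[|evSA S A 0 0]] condMeanX μ X (evSA S A 0 0) Y)
    (hmint : Integrable m11 μ ∧ Integrable m10 μ ∧ Integrable m01 μ ∧ Integrable m00 μ)
    -- arbitrary (possibly misspecified) propensity nuisances, measurable in X and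
    -- bounded away from 0 and 1 as appropriate
    (pA1 pA0 pS : Ω → ℝ)
    (hpA1 : Measurable[MeasurableSpace.comap X inferInstance] pA1)
    (hpA0 : Measurable[MeasurableSpace.comap X inferInstance] pA0)
    (hpS : Measurable[MeasurableSpace.comap X inferInstance] pS)
    (ε : ℝ) (hε : 0 < ε)
    (hb : ∀ ω, 0 ≤ pS ω ∧ pS ω < 1 - ε ∧ ε < pA0 ω ∧ pA0 ω < 1 - ε ∧
      0 ≤ pA1 ω ∧ pA1 ω < 1 - ε) :
    -- the EIF estimating equation is unbiased at θ₀
    ∫ ω, EIF S A Y (∫ ω, S ω * A ω ∂μ) m10 m01 m00 pA1 pA0 pS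
        (∫ ω, (m11 ω - m10 ω - (m01 ω - m00 ω)) ∂(μ[|evSA S A 1 1])) ω ∂μ = 0 := by
  obtain ⟨hm11i, hm10i, hm01i, hm00i⟩ := hmint
  have hE := measurableSet_evSA hS hA
  have hw (ω : Ω) := norm_propensity_weights_le hε (hb ω)
  have residual (s a : ℝ) {g m : Ω → ℝ}
      (hg : Measurable[MeasurableSpace.comap X inferInstance] g) {C : ℝ}
      (hgC : ∀ ω, ‖g ω‖ ≤ C) (hm : Integrable m μ)
      (hmt : m =ᵐ[μ[|evSA S A s a]] condMeanX μ X (evSA S A s a) Y) :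
      Integrable ((evSA S A s a).indicator fun ω => g ω * (Y ω - m ω)) μ ∧
        ∫ ω, (evSA S A s a).indicator (fun ω => g ω * (Y ω - m ω)) ω ∂μ = 0 :=
    ⟨((hYint.sub hm).bdd_mul (hg.mono hX.comap_le le_rfl).aestronglyMeasurable
        (ae_of_all _ hgC)).indicator (hE s a),
      integral_indicator_mul_sub_condMeanX_eq_zero μ hX (hE s a) hYint hmt hg hgC⟩
  obtain ⟨i11, z11⟩ := residual 1 1 measurable_const (fun _ => norm_one.le) hm11i hm11t
  obtain ⟨i10, z10⟩ := residual 1 0 (g := fun ω => -(pA1 ω / (1 - pA1 ω)))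
    (hpA1.div (measurable_const.sub hpA1)).neg
    (fun ω => (norm_neg _).trans_le (hw ω).1) hm10i hm10t
  obtain ⟨i01, z01⟩ := residual 0 1 (g := fun ω => -(pA1 ω / pA0 ω * (pS ω / (1 - pS ω))))
    ((hpA1.div hpA0).mul (hpS.div (measurable_const.sub hpS))).neg
    (fun ω => (norm_neg _).trans_le (hw ω).2.1) hm01i hm01t
  obtain ⟨i00, z00⟩ := residual 0 0
    (g := fun ω => pA1 ω / (1 - pA0 ω) * (pS ω / (1 - pS ω)))
    ((hpA1.div (measurable_const.sub hpA0)).mul (hpS.div (measurable_const.sub hpS)))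
    (fun ω => (hw ω).2.2) hm00i hm00t
  have hΔ : Integrable (fun ω => m11 ω - m10 ω - (m01 ω - m00 ω)) μ :=
    (hm11i.sub hm10i).sub (hm01i.sub hm00i)
  have iΔ : Integrable ((evSA S A 1 1).indicator fun ω => m11 ω - m10 ω - (m01 ω - m00 ω) -
      ∫ ω, (m11 ω - m10 ω - (m01 ω - m00 ω)) ∂(μ[|evSA S A 1 1])) μ :=
    (hΔ.sub (integrable_const _)).indicator (hE 1 1)
  have zΔ := integral_indicator_sub_integral_cond_eq_zero μ (hE 1 1) hΔ
  simp only [one_mul] at i11 z11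
  rw [integral_congr_ae (ae_of_all _ fun ω => EIF_eq_inv_mul_sum_indicator (hSbin ω) (hAbin ω)
      _ _ m11 m10 m01 m00 pA1 pA0 pS), integral_const_mul,
    integral_add' (((i11.add iΔ).add i10).add i01) i00, integral_add' ((i11.add iΔ).add i10) i01,
    integral_add' (i11.add iΔ) i10, integral_add' i11 iΔ, z11, zΔ, z10, z01, z00]
  simp

theorem stmt6
    {Ω 𝓧 : Type*} [MeasurableSpace Ω] [MeasurableSpace 𝓧]
    (μ : Measure Ω) [IsProbabilityMeasure μ]
    (S A Y : Ω → ℝ) (X : Ω → 𝓧)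
    (hX : Measurable X) (hS : Measurable S) (hA : Measurable A) (hYm : Measurable Y)
    (hSbin : ∀ ω, S ω = 0 ∨ S ω = 1) (hAbin : ∀ ω, A ω = 0 ∨ A ω = 1)
    (hYint : Integrable Y μ)
    (hpos : ∀ s a : ℝ, (s = 0 ∨ s = 1) → (a = 0 ∨ a = 1) → 0 < μ (evSA S A s a))
    (hintc : ∀ s a : ℝ, Integrable Y (μ[|evSA S A s a]))
    -- true outcome regressions μ_Y(s,a,X), measurable functions of X
    (m11 m10 m01 m00 : Ω → ℝ)
    (hm11 : Measurable[MeasurableSpace.comap X inferInstance] m11)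
    (hm10 : Measurable[MeasurableSpace.comap X inferInstance] m10)
    (hm01 : Measurable[MeasurableSpace.comap X inferInstance] m01)
    (hm00 : Measurable[MeasurableSpace.comap X inferInstance] m00)
    (hm11t : m11 =ᵐ[μ[|evSA S A 1 1]] condMeanX μ X (evSA S A 1 1) Y)
    (hm10t : m10 =ᵐ[μ[|evSA S A 1 0]] condMeanX μ X (evSA S A 1 0) Y)
    (hm01t : m01 =ᵐ[μ[|evSA S A 0 1]] condMeanX μ X (evSA S A 0 1) Y)
    (hm00t : m00 =ᵐ[μ[|evSA S A 0 0]] condMeanX μ X (evSA S A 0 0) Y)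
    (hmint : Integrable m11 μ ∧ Integrable m10 μ ∧ Integrable m01 μ ∧ Integrable m00 μ)
    -- arbitrary (possibly misspecified) propensity nuisances, measurable in X and
    -- bounded away from 0 and 1 as appropriate
    (pA1 pA0 pS : Ω → ℝ)
    (hpA1 : Measurable[MeasurableSpace.comap X inferInstance] pA1)
    (hpA0 : Measurable[MeasurableSpace.comap X inferInstance] pA0)
    (hpS : Measurable[MeasurableSpace.comap X inferInstance] pS)
    (ε : ℝ) (hε : 0 < ε)
    (hb : ∀ ω, 0 ≤ pS ω ∧ pS ω < 1 - ε ∧ ε < pA0 ω ∧ pA0 ω < 1 - ε ∧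
      0 ≤ pA1 ω ∧ pA1 ω < 1 - ε) :
    -- the EIF estimating equation is unbiased at θ₀
    ∫ ω, EIF S A Y (∫ ω, S ω * A ω ∂μ) m10 m01 m00 pA1 pA0 pS
        (∫ ω, (m11 ω - m10 ω - (m01 ω - m00 ω)) ∂(μ[|evSA S A 1 1])) ω ∂μ = 0 :=
  stmt6_general μ S A Y X hX hS hA hSbin hAbin hYint m11 m10 m01 m00 hm11t hm10t hm01t hm00t hmint
    pA1 pA0 pS hpA1 hpA0 hpS ε hε hb
end

section
/- With all nuisance functions equal to their true values, E[EIF(O; θ, η₀) | X] = (E[SA|X]/E[SA])·(Δ₁(X) − Δ₀(X) − θ). Consequently E[EIF(O; θ₀, η₀)] = 0. -/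
open MeasureTheory ProbabilityTheory

section Helpers

variable {Ω : Type*} {m : MeasurableSpace Ω} [mΩ : MeasurableSpace Ω] {μ : Measure Ω}

lemma integrable_cond_of_integrable {E : Set Ω} (hc : μ E ≠ 0) {f : Ω → ℝ}
    (hf : Integrable f μ) : Integrable f (μ[|E]) := by
  rw [ProbabilityTheory.cond]
  exact (hf.restrict).smul_measure (ENNReal.inv_ne_top.2 hc)

lemma setIntegral_cond_mul [IsFiniteMeasure μ] {E s : Set Ω} (hE : MeasurableSet E)
    (hc : μ E ≠ 0) (hs : MeasurableSet s) (f : Ω → ℝ) :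
    ∫ x in s ∩ E, f x ∂μ = (μ E).toReal * ∫ x in s, f x ∂(μ[|E]) := by
  rw [ProbabilityTheory.cond, Measure.restrict_smul, Measure.restrict_restrict hs,
    integral_smul_measure, ENNReal.toReal_inv, smul_eq_mul, ← mul_assoc,
    mul_inv_cancel₀ (ENNReal.toReal_ne_zero.2 ⟨hc, measure_ne_top μ E⟩), one_mul]

lemma integral_cond_mul [IsFiniteMeasure μ] {E : Set Ω} (hE : MeasurableSet E)
    (hc : μ E ≠ 0) (f : Ω → ℝ) :
    ∫ x in E, f x ∂μ = (μ E).toReal * ∫ x, f x ∂(μ[|E]) := by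
  have := setIntegral_cond_mul (μ := μ) hE hc MeasurableSet.univ f
  simpa using this

lemma ae_cond_mem {E : Set Ω} (hE : MeasurableSet E) : ∀ᵐ ω ∂(μ[|E]), ω ∈ E := by
  rw [ae_iff]
  have h : {ω | ¬ ω ∈ E} = Eᶜ := rfl
  rw [h, cond_apply hE]
  simp

lemma condexp_indicator_ae_zero [IsProbabilityMeasure μ] (hm : m ≤ mΩ)
    {E : Set Ω} (hE : MeasurableSet E) (hc : μ E ≠ 0) {f : Ω → ℝ}
    (hfi : Integrable (E.indicator f) μ) (hfc : Integrable f (μ[|E]))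
    (h0 : (μ[|E])[f|m] =ᵐ[μ[|E]] 0) :
    μ[E.indicator f|m] =ᵐ[μ] 0 := by
  haveI : IsProbabilityMeasure (μ[|E]) := cond_isProbabilityMeasure hc
  refine (ae_eq_condExp_of_forall_setIntegral_eq hm hfi ?_ ?_ ?_).symm
  · intro s _ _
    exact (integrable_zero _ _ _).integrableOn
  · intro s hs _
    have hsm : MeasurableSet s := hm s hs
    have h1 : ∫ x in s, f x ∂(μ[|E]) = 0 := by
      rw [← setIntegral_condExp hm hfc hs]
      calc ∫ x in s, ((μ[|E])[f|m]) x ∂(μ[|E]) = ∫ x in s, (0:ℝ) ∂(μ[|E]) :=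
            setIntegral_congr_ae hsm (h0.mono fun x hx _ => hx)
        _ = 0 := by simp
    have h2 : ∫ x in s, E.indicator f x ∂μ = 0 := by
      rw [setIntegral_indicator hE, setIntegral_cond_mul hE hc hsm, h1, mul_zero]
    rw [h2]
    simp
  · exact ⟨0, @stronglyMeasurable_const _ _ m _ (0:ℝ), by simp [Filter.EventuallyEq]⟩

lemma reg_zero (hm : m ≤ mΩ) {ν : Measure Ω} [IsProbabilityMeasure ν] {Y g : Ω → ℝ}
    (hY : Integrable Y ν) (hg : Measurable[m] g) (hgint : Integrable g ν)
    (ht : g =ᵐ[ν] ν[Y|m]) : ν[fun ω => Y ω - g ω|m] =ᵐ[ν] 0 := by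
  have h1 : ν[fun ω => Y ω - g ω|m] =ᵐ[ν] ν[Y|m] - ν[g|m] := condExp_sub hY hgint m
  have h2 : ν[g|m] = g := condExp_of_stronglyMeasurable hm hg.stronglyMeasurable hgint
  filter_upwards [h1, ht] with ω hω hteq
  simp only [Pi.zero_apply, hω, Pi.sub_apply, h2, ← hteq, sub_self]

lemma term_zero [IsProbabilityMeasure μ] (hm : m ≤ mΩ)
    {E : Set Ω} (hE : MeasurableSet E) (hc : μ E ≠ 0) {G φ : Ω → ℝ}
    (hGm : Measurable[m] G) {C : ℝ}
    (hGbd : ∀ᵐ ω ∂μ, ω ∈ E → ‖G ω‖ ≤ C)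
    (hφint : Integrable φ μ)
    (hzero : (μ[|E])[φ|m] =ᵐ[μ[|E]] 0) :
    Integrable (E.indicator (fun ω => G ω * φ ω)) μ ∧
      μ[E.indicator (fun ω => G ω * φ ω)|m] =ᵐ[μ] 0 := by
  haveI : IsProbabilityMeasure (μ[|E]) := cond_isProbabilityMeasure hc
  have hGmeas : Measurable G := hGm.mono hm le_rfl
  have hind_eq : E.indicator (fun ω => G ω * φ ω) = fun ω => (E.indicator G ω) * φ ω := by
    funext ω; by_cases h : ω ∈ E <;> simp [h]
  have hbd' : ∀ᵐ ω ∂μ, ‖E.indicator G ω‖ ≤ max C 0 := by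
    filter_upwards [hGbd] with ω hω
    by_cases h : ω ∈ E
    · rw [Set.indicator_of_mem h]; exact (hω h).trans (le_max_left _ _)
    · rw [Set.indicator_of_notMem h]; simp
  have hint : Integrable (fun ω => E.indicator G ω * φ ω) μ :=
    hφint.bdd_mul ((hGmeas.indicator hE).aestronglyMeasurable) hbd'
  have hintI : Integrable (E.indicator (fun ω => G ω * φ ω)) μ := by rw [hind_eq]; exact hint
  have hφcond : Integrable φ (μ[|E]) := integrable_cond_of_integrable hc hφint
  have hGφcond : Integrable (fun ω => G ω * φ ω) (μ[|E]) := by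
    refine hφcond.bdd_mul (c := max C 0) hGmeas.aestronglyMeasurable ?_
    filter_upwards [hGbd.filter_mono cond_absolutelyContinuous.ae_le, _root_.ae_cond_mem hE]
      with ω h1 h2
    exact (h1 h2).trans (le_max_left _ _)
  have hpull : (μ[|E])[fun ω => G ω * φ ω|m] =ᵐ[μ[|E]] G * ((μ[|E])[φ|m]) :=
    condExp_mul_of_stronglyMeasurable_left hGm.stronglyMeasurable hGφcond hφcond
  have hzero' : (μ[|E])[fun ω => G ω * φ ω|m] =ᵐ[μ[|E]] 0 := by
    filter_upwards [hpull, hzero] with ω h1 h2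
    simp only [h1, Pi.mul_apply, h2, Pi.zero_apply, mul_zero]
  exact ⟨hintI, condexp_indicator_ae_zero hm hE hc hintI hGφcond hzero'⟩

end Helpers

theorem stmt8_aux {Ω : Type*} {m : MeasurableSpace Ω} [mΩ : MeasurableSpace Ω]
    (μ : Measure Ω) [IsProbabilityMeasure μ] (hm : m ≤ mΩ)
    (S A Y : Ω → ℝ)
    (hS : Measurable S) (hA : Measurable A)
    (hSbin : ∀ ω, S ω = 0 ∨ S ω = 1) (hAbin : ∀ ω, A ω = 0 ∨ A ω = 1)
    (hYint : Integrable Y μ)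
    (hpos : ∀ s a : ℝ, (s = 0 ∨ s = 1) → (a = 0 ∨ a = 1) → 0 < μ (evSA S A s a))
    (hintc : ∀ s a : ℝ, Integrable Y (μ[|evSA S A s a]))
    (m11 m10 m01 m00 : Ω → ℝ)
    (hm11 : Measurable[m] m11) (hm10 : Measurable[m] m10)
    (hm01 : Measurable[m] m01) (hm00 : Measurable[m] m00)
    (hm11t : m11 =ᵐ[μ[|evSA S A 1 1]] (μ[|evSA S A 1 1])[Y|m])
    (hm10t : m10 =ᵐ[μ[|evSA S A 1 0]] (μ[|evSA S A 1 0])[Y|m])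
    (hm01t : m01 =ᵐ[μ[|evSA S A 0 1]] (μ[|evSA S A 0 1])[Y|m])
    (hm00t : m00 =ᵐ[μ[|evSA S A 0 0]] (μ[|evSA S A 0 0])[Y|m])
    (hmint : Integrable m11 μ ∧ Integrable m10 μ ∧ Integrable m01 μ ∧ Integrable m00 μ)
    (πS πA1 πA0 : Ω → ℝ)
    (hπSm : Measurable[m] πS) (hπA1m : Measurable[m] πA1) (hπA0m : Measurable[m] πA0)
    (hπS : πS =ᵐ[μ] μ[Set.indicator {ω | S ω = 1} (fun _ => (1:ℝ)) | m])
    (hπA1 : πA1 =ᵐ[μ[|{ω | S ω = 1}]]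
      (μ[|{ω | S ω = 1}])[Set.indicator {ω | A ω = 1} (fun _ => (1:ℝ)) | m])
    (ε : ℝ) (hε : 0 < ε)
    (hpos11 : ε < (μ (evSA S A 1 1)).toReal)
    (hbd : ∀ᵐ ω ∂μ, πS ω < 1 - ε ∧ ε < πA0 ω ∧ πA0 ω < 1 - ε ∧ πA1 ω < 1 - ε) :
    (∀ θ : ℝ,
      μ[EIF S A Y (∫ ω, S ω * A ω ∂μ) m10 m01 m00 πA1 πA0 πS θ | m]
        =ᵐ[μ] fun ω =>
          ((μ[fun ω => S ω * A ω | m]) ω / ∫ ω, S ω * A ω ∂μ)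
            * (m11 ω - m10 ω - (m01 ω - m00 ω) - θ))
    ∧
    ∫ ω, EIF S A Y (∫ ω, S ω * A ω ∂μ) m10 m01 m00 πA1 πA0 πS
        (∫ ω, (m11 ω - m10 ω - (m01 ω - m00 ω)) ∂(μ[|evSA S A 1 1])) ω ∂μ = 0 := by
  classical
  have hEm : ∀ s a : ℝ, MeasurableSet (evSA S A s a) := by
    intro s a
    have h : evSA S A s a = S ⁻¹' {s} ∩ A ⁻¹' {a} := by
      ext ω; simp [evSA]
    rw [h]
    exact (hS (measurableSet_singleton s)).inter (hA (measurableSet_singleton a))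
  have hS1meas : MeasurableSet {ω | S ω = 1} := hS (measurableSet_singleton 1)
  have hne11 : μ (evSA S A 1 1) ≠ 0 := (hpos 1 1 (Or.inr rfl) (Or.inr rfl)).ne'
  have hne10 : μ (evSA S A 1 0) ≠ 0 := (hpos 1 0 (Or.inr rfl) (Or.inl rfl)).ne'
  have hne01 : μ (evSA S A 0 1) ≠ 0 := (hpos 0 1 (Or.inl rfl) (Or.inr rfl)).ne'
  have hne00 : μ (evSA S A 0 0) ≠ 0 := (hpos 0 0 (Or.inl rfl) (Or.inl rfl)).ne'
  have hsub11 : evSA S A 1 1 ⊆ {ω | S ω = 1} := fun ω h => h.1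
  have hneS1 : μ {ω | S ω = 1} ≠ 0 := fun h => hne11 (measure_mono_null hsub11 h)
  haveI hP11 : IsProbabilityMeasure (μ[|evSA S A 1 1]) := cond_isProbabilityMeasure hne11
  haveI hP10 : IsProbabilityMeasure (μ[|evSA S A 1 0]) := cond_isProbabilityMeasure hne10
  haveI hP01 : IsProbabilityMeasure (μ[|evSA S A 0 1]) := cond_isProbabilityMeasure hne01
  haveI hP00 : IsProbabilityMeasure (μ[|evSA S A 0 0]) := cond_isProbabilityMeasure hne00
  haveI hPS1 : IsProbabilityMeasure (μ[|{ω | S ω = 1}]) := cond_isProbabilityMeasure hneS1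
  set c : ℝ := ∫ ω, S ω * A ω ∂μ with hcdef
  have hSA_eq : (fun ω => S ω * A ω) = (evSA S A 1 1).indicator (fun _ => (1:ℝ)) := by
    funext ω
    rcases hSbin ω with h | h <;> rcases hAbin ω with h' | h' <;>
      simp [Set.indicator_apply, evSA, h, h']
  have hceq : c = (μ (evSA S A 1 1)).toReal := by
    rw [hcdef, hSA_eq, integral_indicator_const (1:ℝ) (hEm 1 1), smul_eq_mul, mul_one]; rfl
  have hcpos : 0 < c := by rw [hceq]; exact hε.trans hpos11
  have hcne : c ≠ 0 := hcpos.ne'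
  -- nonnegativity of πS
  have hπS_nn : ∀ᵐ ω ∂μ, 0 ≤ πS ω := by
    have h0 : (0:Ω → ℝ) ≤ᵐ[μ] Set.indicator {ω | S ω = 1} (fun _ => (1:ℝ)) :=
      Filter.Eventually.of_forall fun ω => Set.indicator_nonneg (fun _ _ => zero_le_one) ω
    filter_upwards [hπS, condExp_nonneg (m := m) h0] with ω h1 h2
    rw [h1]; exact h2
  -- on {S = 1}, πA1 is between 0 and 1
  have hπA1_mem : ∀ᵐ ω ∂μ, S ω = 1 → (0 ≤ πA1 ω ∧ πA1 ω ≤ 1) := by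
    have hindint : Integrable (Set.indicator {ω | A ω = 1} (fun _ => (1:ℝ)))
        (μ[|{ω | S ω = 1}]) :=
      (integrable_const (1:ℝ)).indicator (hA (measurableSet_singleton 1))
    have h0 : (0:Ω → ℝ) ≤ᵐ[μ[|{ω | S ω = 1}]]
        Set.indicator {ω | A ω = 1} (fun _ => (1:ℝ)) :=
      Filter.Eventually.of_forall fun ω => Set.indicator_nonneg (fun _ _ => zero_le_one) ω
    have h1 : Set.indicator {ω | A ω = 1} (fun _ => (1:ℝ)) ≤ᵐ[μ[|{ω | S ω = 1}]]
        (fun _ => (1:ℝ)) :=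
      Filter.Eventually.of_forall fun ω => Set.indicator_le_self' (fun _ _ => zero_le_one) ω
    have key : ∀ᵐ ω ∂(μ[|{ω | S ω = 1}]), 0 ≤ πA1 ω ∧ πA1 ω ≤ 1 := by
      have hub := condExp_mono (m := m) hindint (integrable_const (1:ℝ)) h1
      rw [condExp_const hm] at hub
      filter_upwards [hπA1, condExp_nonneg (m := m) h0, hub] with ω e1 e2 e3
      rw [e1]; exact ⟨e2, e3⟩
    have hnull : μ ({ω | S ω = 1} ∩ {ω | ¬(0 ≤ πA1 ω ∧ πA1 ω ≤ 1)}) = 0 := by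
      have h2 := ae_iff.1 key
      rw [cond_apply hS1meas] at h2
      rcases mul_eq_zero.1 h2 with h3 | h3
      · exact absurd h3 (ENNReal.inv_ne_zero.2 (measure_ne_top _ _))
      · exact h3
    rw [ae_iff]
    refine measure_mono_null ?_ hnull
    intro ω hω
    simp only [Set.mem_setOf_eq] at hω
    exact ⟨(Classical.not_imp.mp hω).1, (Classical.not_imp.mp hω).2⟩
  -- dichotomy: either πA1 is in [0,1] or πS = 0
  have hdich : ∀ᵐ ω ∂μ, (0 ≤ πA1 ω ∧ πA1 ω ≤ 1) ∨ πS ω = 0 := by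
    have hBmeq : {ω | ¬(0 ≤ πA1 ω ∧ πA1 ω ≤ 1)} = (πA1 ⁻¹' (Set.Icc 0 1))ᶜ := by
      ext ω; simp [Set.mem_Icc]
    have hBm : MeasurableSet[m] {ω | ¬(0 ≤ πA1 ω ∧ πA1 ω ≤ 1)} := by
      rw [hBmeq]; exact (hπA1m measurableSet_Icc).compl
    have hB : MeasurableSet {ω | ¬(0 ≤ πA1 ω ∧ πA1 ω ≤ 1)} := hm _ hBm
    have hπSint : Integrable πS μ := integrable_condExp.congr hπS.symm
    have hindint : Integrable (Set.indicator {ω | S ω = 1} (fun _ => (1:ℝ))) μ :=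
      (integrable_const (1:ℝ)).indicator hS1meas
    have hBnull : μ ({ω | ¬(0 ≤ πA1 ω ∧ πA1 ω ≤ 1)} ∩ {ω | S ω = 1}) = 0 := by
      refine measure_mono_null ?_ (ae_iff.1 hπA1_mem)
      intro ω hω
      simp only [Set.mem_inter_iff, Set.mem_setOf_eq] at hω ⊢
      exact fun himp => hω.1 (himp hω.2)
    have hint0 : ∫ x in {ω | ¬(0 ≤ πA1 ω ∧ πA1 ω ≤ 1)}, πS x ∂μ = 0 := by
      rw [setIntegral_congr_ae hB (hπS.mono fun x hx _ => hx),
        setIntegral_condExp hm hindint hBm, setIntegral_indicator hS1meas,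
        setIntegral_const, smul_eq_mul, mul_one, measureReal_def, hBnull]
      simp
    have hz : πS =ᵐ[μ.restrict {ω | ¬(0 ≤ πA1 ω ∧ πA1 ω ≤ 1)}] 0 :=
      (setIntegral_eq_zero_iff_of_nonneg_ae (ae_restrict_of_ae hπS_nn)
        hπSint.integrableOn).1 hint0
    have hz' : ∀ᵐ ω ∂μ, ω ∈ {ω | ¬(0 ≤ πA1 ω ∧ πA1 ω ≤ 1)} → πS ω = 0 :=
      (ae_restrict_iff' hB).1 hz
    filter_upwards [hz'] with ω h
    by_cases hP : 0 ≤ πA1 ω ∧ πA1 ω ≤ 1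
    · exact Or.inl hP
    · exact Or.inr (h hP)
  -- conditional-mean-zero facts
  have hz11 : (μ[|evSA S A 1 1])[fun ω => Y ω - m11 ω|m] =ᵐ[μ[|evSA S A 1 1]] 0 :=
    reg_zero hm (hintc 1 1) hm11 (integrable_cond_of_integrable hne11 hmint.1) hm11t
  have hz10 : (μ[|evSA S A 1 0])[fun ω => Y ω - m10 ω|m] =ᵐ[μ[|evSA S A 1 0]] 0 :=
    reg_zero hm (hintc 1 0) hm10 (integrable_cond_of_integrable hne10 hmint.2.1) hm10t
  have hz01 : (μ[|evSA S A 0 1])[fun ω => Y ω - m01 ω|m] =ᵐ[μ[|evSA S A 0 1]] 0 :=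
    reg_zero hm (hintc 0 1) hm01 (integrable_cond_of_integrable hne01 hmint.2.2.1) hm01t
  have hz00 : (μ[|evSA S A 0 0])[fun ω => Y ω - m00 ω|m] =ᵐ[μ[|evSA S A 0 0]] 0 :=
    reg_zero hm (hintc 0 0) hm00 (integrable_cond_of_integrable hne00 hmint.2.2.2) hm00t
  -- measurability of the weight functions
  have hG2m : Measurable[m] (fun ω => -(1/c * (πA1 ω / (1 - πA1 ω)))) :=
    ((hπA1m.div (measurable_const.sub hπA1m)).const_mul (1/c)).neg
  have hG3m : Measurable[m] (fun ω => -(1/c * (πA1 ω / πA0 ω) * (πS ω / (1 - πS ω)))) :=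
    (((hπA1m.div hπA0m).const_mul (1/c)).mul
      (hπSm.div (measurable_const.sub hπSm))).neg
  have hG4m : Measurable[m] (fun ω => 1/c * (πA1 ω / (1 - πA0 ω)) * (πS ω / (1 - πS ω))) :=
    ((hπA1m.div (measurable_const.sub hπA0m)).const_mul (1/c)).mul
      (hπSm.div (measurable_const.sub hπSm))
  -- bounds for the weight functions
  have hbd2 : ∀ᵐ ω ∂μ, ω ∈ evSA S A 1 0 →
      ‖-(1/c * (πA1 ω / (1 - πA1 ω)))‖ ≤ 1/c * (1/ε) := by
    filter_upwards [hbd, hπA1_mem] with ω h hmem hE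
    obtain ⟨h1, h2, h3, h4⟩ := h
    obtain ⟨ha, hb⟩ := hmem hE.1
    have hden : ε ≤ 1 - πA1 ω := by linarith
    have hr : 0 ≤ πA1 ω / (1 - πA1 ω) := div_nonneg ha (by linarith)
    have hr2 : πA1 ω / (1 - πA1 ω) ≤ 1/ε := div_le_div₀ zero_le_one hb hε hden
    have h1c : (0:ℝ) ≤ 1/c := by positivity
    rw [norm_neg, Real.norm_eq_abs, abs_of_nonneg (mul_nonneg h1c hr)]
    exact mul_le_mul_of_nonneg_left hr2 h1c
  have hbd3 : ∀ᵐ ω ∂μ, ω ∈ evSA S A 0 1 →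
      ‖-(1/c * (πA1 ω / πA0 ω) * (πS ω / (1 - πS ω)))‖ ≤ 1/c * (1/ε) * (1/ε) := by
    filter_upwards [hbd, hdich, hπS_nn] with ω h hd hSnn _
    obtain ⟨h1, h2, h3, h4⟩ := h
    rcases hd with ⟨ha, hb⟩ | h0
    · have hr1 : 0 ≤ πA1 ω / πA0 ω := div_nonneg ha (le_of_lt (hε.trans h2))
      have hr1' : πA1 ω / πA0 ω ≤ 1/ε := div_le_div₀ zero_le_one hb hε (le_of_lt h2)
      have hr2 : 0 ≤ πS ω / (1 - πS ω) := div_nonneg hSnn (by linarith)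
      have hr2' : πS ω / (1 - πS ω) ≤ 1/ε :=
        div_le_div₀ zero_le_one (by linarith) hε (by linarith)
      have h1c : (0:ℝ) ≤ 1/c := by positivity
      rw [norm_neg, Real.norm_eq_abs,
        abs_of_nonneg (mul_nonneg (mul_nonneg h1c hr1) hr2)]
      exact mul_le_mul (mul_le_mul_of_nonneg_left hr1' h1c) hr2' hr2 (by positivity)
    · rw [h0]
      simp only [zero_div, mul_zero, neg_zero, norm_zero]
      positivity
  have hbd4 : ∀ᵐ ω ∂μ, ω ∈ evSA S A 0 0 →
      ‖1/c * (πA1 ω / (1 - πA0 ω)) * (πS ω / (1 - πS ω))‖ ≤ 1/c * (1/ε) * (1/ε) := by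
    filter_upwards [hbd, hdich, hπS_nn] with ω h hd hSnn _
    obtain ⟨h1, h2, h3, h4⟩ := h
    rcases hd with ⟨ha, hb⟩ | h0
    · have hden : ε ≤ 1 - πA0 ω := by linarith
      have hr1 : 0 ≤ πA1 ω / (1 - πA0 ω) := div_nonneg ha (by linarith)
      have hr1' : πA1 ω / (1 - πA0 ω) ≤ 1/ε := div_le_div₀ zero_le_one hb hε hden
      have hr2 : 0 ≤ πS ω / (1 - πS ω) := div_nonneg hSnn (by linarith)
      have hr2' : πS ω / (1 - πS ω) ≤ 1/ε :=
        div_le_div₀ zero_le_one (by linarith) hε (by linarith)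
      have h1c : (0:ℝ) ≤ 1/c := by positivity
      rw [Real.norm_eq_abs, abs_of_nonneg (mul_nonneg (mul_nonneg h1c hr1) hr2)]
      exact mul_le_mul (mul_le_mul_of_nonneg_left hr1' h1c) hr2' hr2 (by positivity)
    · rw [h0]
      simp only [zero_div, mul_zero, norm_zero]
      positivity
  -- the four vanishing terms
  have ht1 := term_zero (μ := μ) hm (hEm 1 1) hne11 (G := fun _ => 1/c)
      measurable_const (C := 1/c)
      (Filter.Eventually.of_forall (fun ω _ => by
        rw [Real.norm_eq_abs, abs_of_nonneg (by positivity : (0:ℝ) ≤ 1/c)]))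
      (φ := fun ω => Y ω - m11 ω) (hYint.sub hmint.1) hz11
  have ht2 := term_zero (μ := μ) hm (hEm 1 0) hne10 hG2m hbd2 (φ := fun ω => Y ω - m10 ω) (hYint.sub hmint.2.1) hz10
  have ht3 := term_zero (μ := μ) hm (hEm 0 1) hne01 hG3m hbd3 (φ := fun ω => Y ω - m01 ω) (hYint.sub hmint.2.2.1) hz01
  have ht4 := term_zero (μ := μ) hm (hEm 0 0) hne00 hG4m hbd4 (φ := fun ω => Y ω - m00 ω) (hYint.sub hmint.2.2.2) hz00
  have hind1int : Integrable ((evSA S A 1 1).indicator (fun _ => (1:ℝ))) μ :=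
    (integrable_const (1:ℝ)).indicator (hEm 1 1)
  have hSAc : μ[fun ω => S ω * A ω|m] = μ[(evSA S A 1 1).indicator (fun _ => (1:ℝ))|m] := by
    rw [hSA_eq]
  -- the key fact, for every θ
  have key : ∀ θ : ℝ, Integrable (EIF S A Y c m10 m01 m00 πA1 πA0 πS θ) μ ∧
      μ[EIF S A Y c m10 m01 m00 πA1 πA0 πS θ|m] =ᵐ[μ]
        fun ω => ((μ[fun ω => S ω * A ω|m]) ω / c)
          * (m11 ω - m10 ω - (m01 ω - m00 ω) - θ) := by
    intro θ
    set G1 : Ω → ℝ := fun ω => 1/c * (m11 ω - m10 ω - m01 ω + m00 ω - θ) with hG1def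
    have hG1m : Measurable[m] G1 :=
      ((((hm11.sub hm10).sub hm01).add hm00).sub measurable_const).const_mul (1/c)
    have hG1int : Integrable G1 μ :=
      ((((hmint.1.sub hmint.2.1).sub hmint.2.2.1).add hmint.2.2.2).sub
        (integrable_const θ)).const_mul (1/c)
    set P1 : Ω → ℝ := (evSA S A 1 1).indicator (fun ω => (1/c) * (Y ω - m11 ω)) with hP1def
    set P2 : Ω → ℝ := fun ω => G1 ω * (evSA S A 1 1).indicator (fun _ => (1:ℝ)) ω
      with hP2def
    set P3 : Ω → ℝ := (evSA S A 1 0).indicator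
      (fun ω => -(1/c * (πA1 ω / (1 - πA1 ω))) * (Y ω - m10 ω)) with hP3def
    set P4 : Ω → ℝ := (evSA S A 0 1).indicator
      (fun ω => -(1/c * (πA1 ω / πA0 ω) * (πS ω / (1 - πS ω))) * (Y ω - m01 ω)) with hP4def
    set P5 : Ω → ℝ := (evSA S A 0 0).indicator
      (fun ω => (1/c * (πA1 ω / (1 - πA0 ω)) * (πS ω / (1 - πS ω))) * (Y ω - m00 ω))
      with hP5def
    have hi1 : Integrable P1 μ := ht1.1
    have hi2 : Integrable P2 μ := by
      have hP2eq : P2 = (evSA S A 1 1).indicator G1 := by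
        funext ω; by_cases hmem : ω ∈ evSA S A 1 1 <;>
          simp [hP2def, hmem]
      rw [hP2eq]; exact hG1int.indicator (hEm 1 1)
    have hi3 : Integrable P3 μ := ht2.1
    have hi4 : Integrable P4 μ := ht3.1
    have hi5 : Integrable P5 μ := ht4.1
    have hpull : μ[P2|m] =ᵐ[μ]
        fun ω => G1 ω * (μ[(evSA S A 1 1).indicator (fun _ => (1:ℝ))|m]) ω :=
      condExp_mul_of_stronglyMeasurable_left hG1m.stronglyMeasurable hi2 hind1int
    have w1 : μ[P1|m] =ᵐ[μ] 0 := ht1.2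
    have w3 : μ[P3|m] =ᵐ[μ] 0 := ht2.2
    have w4 : μ[P4|m] =ᵐ[μ] 0 := ht3.2
    have w5 : μ[P5|m] =ᵐ[μ] 0 := ht4.2
    have hdec : EIF S A Y c m10 m01 m00 πA1 πA0 πS θ = P1 + P2 + P3 + P4 + P5 := by
      funext ω
      simp only [Pi.add_apply, hP1def, hP2def, hP3def, hP4def, hP5def, hG1def]
      rcases hSbin ω with h | h <;> rcases hAbin ω with h' | h' <;>
        simp only [EIF, Set.indicator_apply, evSA, Set.mem_setOf_eq, h, h'] <;>
        norm_num <;> ring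
    constructor
    · rw [hdec]
      exact (((hi1.add hi2).add hi3).add hi4).add hi5
    · rw [hdec]
      refine (condExp_add (((hi1.add hi2).add hi3).add hi4) hi5 m).trans ?_
      refine (Filter.EventuallyEq.add
        (condExp_add ((hi1.add hi2).add hi3) hi4 m) Filter.EventuallyEq.rfl).trans ?_
      refine (Filter.EventuallyEq.add (Filter.EventuallyEq.add
        (condExp_add (hi1.add hi2) hi3 m) Filter.EventuallyEq.rfl)
        Filter.EventuallyEq.rfl).trans ?_
      refine (Filter.EventuallyEq.add (Filter.EventuallyEq.add (Filter.EventuallyEq.add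
        (condExp_add hi1 hi2 m) Filter.EventuallyEq.rfl) Filter.EventuallyEq.rfl)
        Filter.EventuallyEq.rfl).trans ?_
      filter_upwards [w1, w3, w4, w5, hpull] with ω z1 z3 z4 z5 pp
      simp only [Pi.add_apply, Pi.zero_apply, z1, z3, z4, z5, pp, hSAc, hG1def]
      ring
  -- part (ii)
  obtain ⟨hint0, heq0⟩ :=
    key (∫ ω, (m11 ω - m10 ω - (m01 ω - m00 ω)) ∂(μ[|evSA S A 1 1]))
  set θ₀ : ℝ := ∫ ω, (m11 ω - m10 ω - (m01 ω - m00 ω)) ∂(μ[|evSA S A 1 1]) with hθ₀def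
  refine ⟨fun θ => (key θ).2, ?_⟩
  have hDm : Measurable[m] (fun ω => m11 ω - m10 ω - (m01 ω - m00 ω) - θ₀) :=
    ((hm11.sub hm10).sub (hm01.sub hm00)).sub measurable_const
  have hDint : Integrable (fun ω => m11 ω - m10 ω - (m01 ω - m00 ω) - θ₀) μ :=
    ((hmint.1.sub hmint.2.1).sub (hmint.2.2.1.sub hmint.2.2.2)).sub (integrable_const θ₀)
  have hprod_eq : (fun ω => (m11 ω - m10 ω - (m01 ω - m00 ω) - θ₀)
        * (evSA S A 1 1).indicator (fun _ => (1:ℝ)) ω)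
      = (evSA S A 1 1).indicator (fun ω => m11 ω - m10 ω - (m01 ω - m00 ω) - θ₀) := by
    funext ω; by_cases hmem : ω ∈ evSA S A 1 1 <;> simp [hmem]
  have hprodint : Integrable (fun ω => (m11 ω - m10 ω - (m01 ω - m00 ω) - θ₀)
      * (evSA S A 1 1).indicator (fun _ => (1:ℝ)) ω) μ := by
    rw [hprod_eq]; exact hDint.indicator (hEm 1 1)
  have hpull2 : μ[fun ω => (m11 ω - m10 ω - (m01 ω - m00 ω) - θ₀)
        * (evSA S A 1 1).indicator (fun _ => (1:ℝ)) ω|m]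
      =ᵐ[μ] (fun ω => m11 ω - m10 ω - (m01 ω - m00 ω) - θ₀)
        * μ[(evSA S A 1 1).indicator (fun _ => (1:ℝ))|m] :=
    condExp_mul_of_stronglyMeasurable_left hDm.stronglyMeasurable hprodint hind1int
  have h3 : ∫ ω, (m11 ω - m10 ω - (m01 ω - m00 ω) - θ₀) ∂(μ[|evSA S A 1 1]) = 0 := by
    have hsubint : Integrable (fun ω => m11 ω - m10 ω - (m01 ω - m00 ω))
        (μ[|evSA S A 1 1]) :=
      ((integrable_cond_of_integrable hne11 hmint.1).sub
        (integrable_cond_of_integrable hne11 hmint.2.1)).sub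
        ((integrable_cond_of_integrable hne11 hmint.2.2.1).sub
          (integrable_cond_of_integrable hne11 hmint.2.2.2))
    have e : ∫ ω, (m11 ω - m10 ω - (m01 ω - m00 ω) - θ₀) ∂(μ[|evSA S A 1 1])
        = (∫ ω, (m11 ω - m10 ω - (m01 ω - m00 ω)) ∂(μ[|evSA S A 1 1]))
          - ∫ _ω, θ₀ ∂(μ[|evSA S A 1 1]) :=
      integral_sub hsubint (integrable_const θ₀)
    rw [e, integral_const]
    simp [hθ₀def]
  have hI : ∫ ω, (m11 ω - m10 ω - (m01 ω - m00 ω) - θ₀)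
      * (μ[(evSA S A 1 1).indicator (fun _ => (1:ℝ))|m]) ω ∂μ = 0 := by
    calc ∫ ω, (m11 ω - m10 ω - (m01 ω - m00 ω) - θ₀)
          * (μ[(evSA S A 1 1).indicator (fun _ => (1:ℝ))|m]) ω ∂μ
        = ∫ ω, (μ[fun ω => (m11 ω - m10 ω - (m01 ω - m00 ω) - θ₀)
            * (evSA S A 1 1).indicator (fun _ => (1:ℝ)) ω|m]) ω ∂μ :=
          (integral_congr_ae hpull2).symm
      _ = ∫ ω, (m11 ω - m10 ω - (m01 ω - m00 ω) - θ₀)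
            * (evSA S A 1 1).indicator (fun _ => (1:ℝ)) ω ∂μ := integral_condExp hm
      _ = ∫ ω, ((evSA S A 1 1).indicator
            (fun ω => m11 ω - m10 ω - (m01 ω - m00 ω) - θ₀)) ω ∂μ :=
          integral_congr_ae (Filter.Eventually.of_forall fun ω => congrFun hprod_eq ω)
      _ = ∫ ω in evSA S A 1 1, (m11 ω - m10 ω - (m01 ω - m00 ω) - θ₀) ∂μ :=
          integral_indicator (hEm 1 1)
      _ = (μ (evSA S A 1 1)).toReal
            * ∫ ω, (m11 ω - m10 ω - (m01 ω - m00 ω) - θ₀) ∂(μ[|evSA S A 1 1]) :=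
          integral_cond_mul (hEm 1 1) hne11 _
      _ = 0 := by rw [h3, mul_zero]
  calc ∫ ω, EIF S A Y c m10 m01 m00 πA1 πA0 πS θ₀ ω ∂μ
      = ∫ ω, (μ[EIF S A Y c m10 m01 m00 πA1 πA0 πS θ₀|m]) ω ∂μ :=
        (integral_condExp hm).symm
    _ = ∫ ω, ((μ[fun ω => S ω * A ω|m]) ω / c)
          * (m11 ω - m10 ω - (m01 ω - m00 ω) - θ₀) ∂μ := integral_congr_ae heq0
    _ = ∫ ω, (1/c) * ((m11 ω - m10 ω - (m01 ω - m00 ω) - θ₀)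
          * (μ[(evSA S A 1 1).indicator (fun _ => (1:ℝ))|m]) ω) ∂μ := by
        rw [hSAc]
        exact integral_congr_ae (Filter.Eventually.of_forall fun ω => by ring)
    _ = (1/c) * ∫ ω, (m11 ω - m10 ω - (m01 ω - m00 ω) - θ₀)
          * (μ[(evSA S A 1 1).indicator (fun _ => (1:ℝ))|m]) ω ∂μ :=
        integral_const_mul _ _
    _ = 0 := by rw [hI, mul_zero]

theorem stmt8
    {Ω 𝓧 : Type*} [MeasurableSpace Ω] [MeasurableSpace 𝓧]
    (μ : Measure Ω) [IsProbabilityMeasure μ]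
    (S A Y : Ω → ℝ) (X : Ω → 𝓧)
    (hX : Measurable X) (hS : Measurable S) (hA : Measurable A) (hYm : Measurable Y)
    (hSbin : ∀ ω, S ω = 0 ∨ S ω = 1) (hAbin : ∀ ω, A ω = 0 ∨ A ω = 1)
    (hYint : Integrable Y μ)
    (hpos : ∀ s a : ℝ, (s = 0 ∨ s = 1) → (a = 0 ∨ a = 1) → 0 < μ (evSA S A s a))
    (hintc : ∀ s a : ℝ, Integrable Y (μ[|evSA S A s a]))
    -- true outcome regressions, measurable in X
    (m11 m10 m01 m00 : Ω → ℝ)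
    (hm11 : Measurable[MeasurableSpace.comap X inferInstance] m11)
    (hm10 : Measurable[MeasurableSpace.comap X inferInstance] m10)
    (hm01 : Measurable[MeasurableSpace.comap X inferInstance] m01)
    (hm00 : Measurable[MeasurableSpace.comap X inferInstance] m00)
    (hm11t : m11 =ᵐ[μ[|evSA S A 1 1]] condMeanX μ X (evSA S A 1 1) Y)
    (hm10t : m10 =ᵐ[μ[|evSA S A 1 0]] condMeanX μ X (evSA S A 1 0) Y)
    (hm01t : m01 =ᵐ[μ[|evSA S A 0 1]] condMeanX μ X (evSA S A 0 1) Y)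
    (hm00t : m00 =ᵐ[μ[|evSA S A 0 0]] condMeanX μ X (evSA S A 0 0) Y)
    (hmint : Integrable m11 μ ∧ Integrable m10 μ ∧ Integrable m01 μ ∧ Integrable m00 μ)
    -- true propensity functions, measurable in X
    (πS πA1 πA0 : Ω → ℝ)
    (hπSm : Measurable[MeasurableSpace.comap X inferInstance] πS)
    (hπA1m : Measurable[MeasurableSpace.comap X inferInstance] πA1)
    (hπA0m : Measurable[MeasurableSpace.comap X inferInstance] πA0)
    (hπS : πS =ᵐ[μ] μ[Set.indicator {ω | S ω = 1} (fun _ => (1:ℝ)) |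
      MeasurableSpace.comap X inferInstance])
    (hπA1 : πA1 =ᵐ[μ[|{ω | S ω = 1}]]
      (μ[|{ω | S ω = 1}])[Set.indicator {ω | A ω = 1} (fun _ => (1:ℝ)) |
        MeasurableSpace.comap X inferInstance])
    (hπA0 : πA0 =ᵐ[μ[|{ω | S ω = 0}]]
      (μ[|{ω | S ω = 0}])[Set.indicator {ω | A ω = 1} (fun _ => (1:ℝ)) |
        MeasurableSpace.comap X inferInstance])
    -- positivity
    (ε : ℝ) (hε : 0 < ε)
    (hpos11 : ε < (μ (evSA S A 1 1)).toReal)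
    (hbd : ∀ᵐ ω ∂μ, πS ω < 1 - ε ∧ ε < πA0 ω ∧ πA0 ω < 1 - ε ∧ πA1 ω < 1 - ε) :
    -- (i) E[EIF(O; θ, η₀) | X] = (E[SA|X]/E[SA]) · (Δ₁(X) − Δ₀(X) − θ) for every θ
    (∀ θ : ℝ,
      μ[EIF S A Y (∫ ω, S ω * A ω ∂μ) m10 m01 m00 πA1 πA0 πS θ |
          MeasurableSpace.comap X inferInstance]
        =ᵐ[μ] fun ω =>
          ((μ[fun ω => S ω * A ω | MeasurableSpace.comap X inferInstance]) ω
              / ∫ ω, S ω * A ω ∂μ)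
            * (m11 ω - m10 ω - (m01 ω - m00 ω) - θ))
    ∧
    -- (ii) consequently the EIF has mean zero at θ₀
    ∫ ω, EIF S A Y (∫ ω, S ω * A ω ∂μ) m10 m01 m00 πA1 πA0 πS
        (∫ ω, (m11 ω - m10 ω - (m01 ω - m00 ω)) ∂(μ[|evSA S A 1 1])) ω ∂μ = 0 :=
  stmt8_aux μ hX.comap_le S A Y hS hA hSbin hAbin hYint hpos hintc
    m11 m10 m01 m00 hm11 hm10 hm01 hm00 hm11t hm10t hm01t hm00t hmint
    πS πA1 πA0 hπSm hπA1m hπA0m hπS hπA1 ε hε hpos11 hbd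
end
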